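/- arXiv:1411.4441 — 5 statements merged into one kernel-verified Lean document; each statement's English description precedes it below -/
import Mathlib

section
/- Every doubly stochastic n×n matrix is a convex combination of permutation matrices (Birkhoff's theorem). -/
open Finset MeasureTheory
open scoped Classical

noncomputable section

/-- Components of `X` sorted in increasing order. -/
def osort {n : ℕ} (X : Fin n → ℝ) : Fin n → ℝ := X ∘ Tuple.sort X

/-- Sum of the `k` smallest components of `X`. -/
def psum {n : ℕ} (X : Fin n → ℝ) (k : ℕ) : ℝ :=
  ∑ j : Fin n, if (j : ℕ) < k then osort X j else 0

/-- `AVaR_{i/n}(X) = (x_[i+1] + ... + x_[n]) / (n - i)`. -/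
def avar {n : ℕ} (X : Fin n → ℝ) (i : ℕ) : ℝ :=
  (∑ j : Fin n, if i ≤ (j : ℕ) then osort X j else 0) / ((n : ℝ) - (i : ℝ))

/-- Cumulative distribution function on the uniform `n`-point space. -/
def cdf {n : ℕ} (X : Fin n → ℝ) (t : ℝ) : ℝ :=
  ((univ.filter fun j => X j ≤ t).card : ℝ) / (n : ℝ)

/-- Value-at-Risk (lower `p`-quantile). -/
def var {n : ℕ} (X : Fin n → ℝ) (p : ℝ) : ℝ :=
  sInf {t : ℝ | p ≤ cdf X t}

/-- `AVaR_α(X) = (1/(1-α)) ∫_α^1 VaR_u(X) du`. -/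
def avarC {n : ℕ} (X : Fin n → ℝ) (α : ℝ) : ℝ :=
  (1 / (1 - α)) * ∫ u in α..1, var X u

/-- Maximum component (essential supremum). -/
def vmax {n : ℕ} (X : Fin n → ℝ) : ℝ := sSup (Set.range X)

/-- Comonotonicity of two random vectors. -/
def Comonotone {n : ℕ} (X Y : Fin n → ℝ) : Prop :=
  ∀ j k, 0 ≤ (X j - X k) * (Y j - Y k)

/-- The permutation matrix of `σ`. -/
def permMat {n : ℕ} (σ : Equiv.Perm (Fin n)) : Matrix (Fin n) (Fin n) ℝ :=
  fun i k => if σ i = k then 1 else 0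

lemma permMat_eq_permMatrix {n : ℕ} (σ : Equiv.Perm (Fin n)) :
    permMat σ = σ.permMatrix ℝ := by
  ext i k
  simp [permMat, Equiv.Perm.permMatrix, PEquiv.toMatrix_apply, Equiv.toPEquiv_apply,
    Option.mem_def, eq_comm]

lemma exists_fin_convex_combination_of_fintype {ι M : Type*} [Fintype ι] [AddCommMonoid M]
    [Module ℝ M] {x : M} (w : ι → ℝ) (f : ι → M) (hw₀ : ∀ i, 0 ≤ w i) (hw₁ : ∑ i, w i = 1)
    (hx : x = ∑ i, w i • f i) :
    ∃ (m : ℕ) (v : Fin m → ℝ) (g : Fin m → ι),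
      (∀ j, 0 ≤ v j) ∧ (∑ j, v j = 1) ∧ x = ∑ j, v j • f (g j) := by
  let e := (Fintype.equivFin ι).symm
  refine ⟨Fintype.card ι, w ∘ e, e, fun j => hw₀ (e j), ?_, ?_⟩
  · rwa [← Equiv.sum_comp e w] at hw₁
  · rw [hx, ← Equiv.sum_comp e]
    rfl

/-- Birkhoff: every doubly stochastic matrix is a convex
combination of permutation matrices. -/
theorem birkhoff {n : ℕ} (A : Matrix (Fin n) (Fin n) ℝ)
    (h0 : ∀ i j, 0 ≤ A i j) (hrow : ∀ i, ∑ j, A i j = 1)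
    (hcol : ∀ j, ∑ i, A i j = 1) :
    ∃ (m : ℕ) (w : Fin m → ℝ) (σ : Fin m → Equiv.Perm (Fin n)),
      (∀ j, 0 ≤ w j) ∧ (∑ j, w j = 1) ∧ A = ∑ j, w j • permMat (σ j) := by
  have hA : A ∈ doublyStochastic ℝ (Fin n) :=
    mem_doublyStochastic_iff_sum.2 ⟨h0, hrow, hcol⟩
  obtain ⟨w, hw₀, hw₁, hwA⟩ := exists_eq_sum_perm_of_mem_doublyStochastic hA
  simp_rw [← permMat_eq_permMatrix] at hwA
  exact exists_fin_convex_combination_of_fintype w permMat hw₀ hw₁ hwA.symm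

end
end

section
/- Let ρ: ℝⁿ → ℝ be monotone (X ≤ Y componentwise implies ρ(X) ≤ ρ(Y)), convex, and permutation invariant (ρ(X∘π) = ρ(X) for every permutation π). If X ≤ AY componentwise for some doubly stochastic matrix A, then ρ(X) ≤ ρ(Y). -/
open Finset MeasureTheory
open scoped Classical

noncomputable section

open scoped Matrix in
/-- By Birkhoff's theorem `A *ᵥ Y` is a convex combination of the rearrangements `Y ∘ σ`. -/
theorem ConvexOn.map_mulVec_le_of_mem_doublyStochastic {𝕜 ι β : Type*} [Field 𝕜] [LinearOrder 𝕜]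
    [IsStrictOrderedRing 𝕜] [Fintype ι] [DecidableEq ι] [AddCommGroup β] [PartialOrder β]
    [IsOrderedAddMonoid β] [Module 𝕜 β] [IsStrictOrderedModule 𝕜 β] {f : (ι → 𝕜) → β}
    (hf : ConvexOn 𝕜 Set.univ f) (hperm : ∀ (Y : ι → 𝕜) (σ : Equiv.Perm ι), f (Y ∘ σ) = f Y)
    {A : Matrix ι ι 𝕜} (hA : A ∈ doublyStochastic 𝕜 ι) (Y : ι → 𝕜) :
    f (A *ᵥ Y) ≤ f Y := by
  obtain ⟨w, hw0, hw1, rfl⟩ := exists_eq_sum_perm_of_mem_doublyStochastic hA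
  calc f ((∑ σ, w σ • σ.permMatrix 𝕜) *ᵥ Y) = f (∑ σ, w σ • (Y ∘ σ)) := by
        simp only [Matrix.sum_mulVec, Matrix.smul_mulVec, Matrix.permMatrix_mulVec]
    _ ≤ ∑ σ, w σ • f (Y ∘ σ) :=
        hf.map_sum_le (fun σ _ => hw0 σ) hw1 (fun σ _ => Set.mem_univ _)
    _ = f Y := by simp only [hperm, ← Finset.sum_smul, hw1, one_smul]

/-- a monotone, convex, permutation invariant functional is
monotone along `X ≤ A Y` with `A` doubly stochastic. -/
theorem schur_like_monotonicity {n : ℕ} (ρ : (Fin n → ℝ) → ℝ)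
    (hmono : ∀ X Y : Fin n → ℝ, (∀ i, X i ≤ Y i) → ρ X ≤ ρ Y)
    (hconv : ∀ (X Y : Fin n → ℝ) (l : ℝ), 0 ≤ l → l ≤ 1 →
      ρ (fun i => l * X i + (1 - l) * Y i) ≤ l * ρ X + (1 - l) * ρ Y)
    (hperm : ∀ (X : Fin n → ℝ) (π : Equiv.Perm (Fin n)), ρ (X ∘ π) = ρ X)
    (X Y : Fin n → ℝ) (A : Matrix (Fin n) (Fin n) ℝ)
    (h0 : ∀ i j, 0 ≤ A i j) (hrow : ∀ i, ∑ j, A i j = 1)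
    (hcol : ∀ j, ∑ i, A i j = 1)
    (hXY : ∀ i, X i ≤ A.mulVec Y i) :
    ρ X ≤ ρ Y := by
  have hρ : ConvexOn ℝ Set.univ ρ := ⟨convex_univ, fun X _ Y _ a b ha _ hab => by
    obtain rfl : b = 1 - a := by linarith
    exact hconv X Y a ha (by linarith)⟩
  calc ρ X ≤ ρ (A.mulVec Y) := hmono _ _ hXY
    _ ≤ ρ Y := hρ.map_mulVec_le_of_mem_doublyStochastic hperm
        (mem_doublyStochastic_iff_sum.2 ⟨h0, hrow, hcol⟩) Y

end
end

section
/- For a random variable X on the uniform discrete n-point space and (i−1)/n ≤ α ≤ i/n, setting λ = (n(1−α) − (n−i+1)(i−nα))/(n(1−α)), one has 0 ≤ λ ≤ 1 and AVaR_α(X) = λ·AVaR_{i/n}(X) + (1−λ)·AVaR_{(i−1)/n}(X). -/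
open Finset MeasureTheory
open scoped Classical

noncomputable section

/-!
On the uniform `n`-point space the quantile function `u ↦ VaR_u(X)` is the step function equal
to the order statistic `x_[k+1]` on `(k/n, (k+1)/n]`. Hence for `(i-1)/n ≤ α ≤ i/n`,
`(1 - α) AVaR_α(X) = (i/n - α) x_[i] + (x_[i+1] + ⋯ + x_[n]) / n`, which is affine in the two
grid values `(n - i) AVaR_{i/n}(X) = x_[i+1] + ⋯ + x_[n]` and
`(n - i + 1) AVaR_{(i-1)/n}(X) = x_[i] + x_[i+1] + ⋯ + x_[n]`.
-/

theorem intervalIntegrable_of_eqOn_const {E : Type*} [NormedAddCommGroup E] {f : ℝ → E}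
    {a b : ℝ} {c : E} (h : Set.EqOn (fun _ => c) f (Set.uIoc a b)) :
    IntervalIntegrable f volume a b :=
  intervalIntegrable_const.congr h

theorem intervalIntegral_eq_of_eqOn_const {E : Type*} [NormedAddCommGroup E] [NormedSpace ℝ E]
    [CompleteSpace E] {f : ℝ → E} {a b : ℝ} {c : E}
    (h : Set.EqOn (fun _ => c) f (Set.uIoc a b)) :
    ∫ x in a..b, f x = (b - a) • c := by
  rw [← intervalIntegral.integral_congr_ae (Filter.Eventually.of_forall fun x hx => h hx),
    intervalIntegral.integral_const]

section OrderStatistics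

variable {n : ℕ} (X : Fin n → ℝ)

/-- `x_[k+1] + ⋯ + x_[n]`: `osort X` is indexed from `0`, so `osort X j = x_[j+1]`. -/
def tailSum (k : ℕ) : ℝ := ∑ j : Fin n, if k ≤ (j : ℕ) then osort X j else 0

theorem avar_eq_tailSum_div (k : ℕ) : avar X k = tailSum X k / ((n : ℝ) - k) := rfl

theorem tailSum_self : tailSum X n = 0 :=
  Finset.sum_eq_zero fun j _ => if_neg (not_le.mpr j.isLt)

theorem tailSum_eq_add {k : ℕ} (hk : k < n) :
    tailSum X k = osort X ⟨k, hk⟩ + tailSum X (k + 1) := by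
  have hsplit : ∀ j : Fin n, (if k ≤ (j : ℕ) then osort X j else 0) =
      (if (⟨k, hk⟩ : Fin n) = j then osort X j else 0) +
        (if k + 1 ≤ (j : ℕ) then osort X j else 0) := by
    intro j
    rcases lt_trichotomy (j : ℕ) k with hj | hj | hj
    · simp [Fin.ext_iff, hj.not_ge, hj.ne', (hj.trans (Nat.lt_succ_self k)).not_ge]
    · simp [Fin.ext_iff, hj]
    · simp [Fin.ext_iff, hj.le, hj.ne, Nat.succ_le_of_lt hj]
  simp only [tailSum, hsplit, sum_add_distrib, sum_ite_eq, mem_univ, if_true]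

theorem cdf_eq_card_osort_le (t : ℝ) :
    cdf X t = (#{j | osort X j ≤ t} : ℝ) / n := by
  rw [cdf]
  congr 2
  exact (card_equiv (Tuple.sort X) fun j => by rw [mem_filter, mem_filter]; simp [osort]).symm

theorem cdf_mono : Monotone (cdf X) := fun _ _ hst =>
  div_le_div_of_nonneg_right
    (Nat.cast_le.mpr (card_le_card (monotone_filter_right _ fun _ _ h => h.trans hst)))
    n.cast_nonneg

theorem succ_div_le_cdf_osort {k : ℕ} (hk : k < n) :
    ((k : ℝ) + 1) / n ≤ cdf X (osort X ⟨k, hk⟩) := by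
  rw [cdf_eq_card_osort_le]
  have hsub :
      Finset.Iic (⟨k, hk⟩ : Fin n) ⊆ univ.filter fun j => osort X j ≤ osort X ⟨k, hk⟩ :=
    fun j hj => mem_filter.mpr ⟨mem_univ j, Tuple.monotone_sort X (mem_Iic.mp hj)⟩
  have hcard := card_le_card hsub
  rw [Fin.card_Iic] at hcard
  gcongr
  exact_mod_cast hcard

theorem cdf_le_div_of_lt_osort {k : ℕ} (hk : k < n) {t : ℝ} (ht : t < osort X ⟨k, hk⟩) :
    cdf X t ≤ k / n := by
  rw [cdf_eq_card_osort_le]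
  have hsub : (univ.filter fun j => osort X j ≤ t) ⊆ Finset.Iio ⟨k, hk⟩ := fun j hj =>
    mem_Iio.mpr <| not_le.mp fun hkj =>
      (ht.trans_le (Tuple.monotone_sort X hkj)).not_ge (mem_filter.mp hj).2
  have hcard := card_le_card hsub
  rw [Fin.card_Iio] at hcard
  gcongr

theorem var_eq_osort {k : ℕ} (hk : k < n) {u : ℝ}
    (hu : u ∈ Set.Ioc ((k : ℝ) / n) ((k + 1) / n)) :
    var X u = osort X ⟨k, hk⟩ := by
  have hset : {t : ℝ | u ≤ cdf X t} = Set.Ici (osort X ⟨k, hk⟩) := by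
    ext t
    simp only [Set.mem_ofPred_eq, Set.mem_Ici]
    refine ⟨fun ht => not_lt.mp fun hlt => ?_, fun ht => ?_⟩
    · exact hu.1.not_ge (ht.trans (cdf_le_div_of_lt_osort X hk hlt))
    · exact hu.2.trans ((succ_div_le_cdf_osort X hk).trans (cdf_mono X ht))
  rw [var, hset, csInf_Ici]

theorem eqOn_var_osort {k : ℕ} (hk : k < n) {a b : ℝ} (ha : (k : ℝ) / n ≤ a) (hab : a ≤ b)
    (hb : b ≤ ((k : ℝ) + 1) / n) :
    Set.EqOn (fun _ => osort X ⟨k, hk⟩) (var X) (Set.uIoc a b) := by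
  intro u hu
  rw [Set.uIoc_of_le hab] at hu
  exact (var_eq_osort X hk ⟨ha.trans_lt hu.1, hu.2.trans hb⟩).symm

theorem intervalIntegrable_and_integral_var_tail {k : ℕ} (hk : k ≤ n) :
    IntervalIntegrable (var X) volume ((k : ℝ) / n) ((n : ℝ) / n) ∧
      ∫ u in (k : ℝ) / n..(n : ℝ) / n, var X u = tailSum X k / n := by
  induction hk using Nat.decreasingInduction with
  | self => simp [tailSum_self]
  | of_succ k hk ih =>
    obtain ⟨ih_int, ih_eq⟩ := ih
    push_cast at ih_int ih_eq
    have hcell := eqOn_var_osort X hk le_rfl (by gcongr; linarith) le_rfl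
    have hcell_int := intervalIntegrable_of_eqOn_const hcell
    refine ⟨hcell_int.trans ih_int, ?_⟩
    rw [← intervalIntegral.integral_add_adjacent_intervals hcell_int ih_int, ih_eq,
      intervalIntegral_eq_of_eqOn_const hcell, smul_eq_mul, tailSum_eq_add X hk]
    ring

theorem integral_var_of_mem_cell {k : ℕ} (hk : k < n) {α : ℝ} (hα1 : (k : ℝ) / n ≤ α)
    (hα2 : α ≤ ((k : ℝ) + 1) / n) :
    ∫ u in α..1, var X u =
      (((k : ℝ) + 1) / n - α) * osort X ⟨k, hk⟩ + tailSum X (k + 1) / n := by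
  have hcell := eqOn_var_osort X hk hα1 hα2 le_rfl
  obtain ⟨htail_int, htail⟩ := intervalIntegrable_and_integral_var_tail X (Nat.succ_le_of_lt hk)
  rw [div_self (Nat.cast_pos.mpr (k.zero_le.trans_lt hk)).ne'] at htail_int htail
  push_cast at htail_int htail
  rw [← intervalIntegral.integral_add_adjacent_intervals
    (intervalIntegrable_of_eqOn_const hcell) htail_int, intervalIntegral_eq_of_eqOn_const hcell,
    smul_eq_mul, htail]

end OrderStatistics

/-- `AVaR_α` interpolates linearly between the grid values
`AVaR_{(i-1)/n}` and `AVaR_{i/n}`. -/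
theorem avar_interpolation {n : ℕ} (i : ℕ) (hi1 : 1 ≤ i) (hi2 : i ≤ n - 1)
    (α : ℝ) (hα1 : ((i : ℝ) - 1) / (n : ℝ) ≤ α) (hα2 : α ≤ (i : ℝ) / (n : ℝ))
    (X : Fin n → ℝ) :
    0 ≤ ((n : ℝ) * (1 - α) - ((n : ℝ) - (i : ℝ) + 1) * ((i : ℝ) - (n : ℝ) * α)) /
        ((n : ℝ) * (1 - α)) ∧
    ((n : ℝ) * (1 - α) - ((n : ℝ) - (i : ℝ) + 1) * ((i : ℝ) - (n : ℝ) * α)) /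
        ((n : ℝ) * (1 - α)) ≤ 1 ∧
    avarC X α =
      (((n : ℝ) * (1 - α) - ((n : ℝ) - (i : ℝ) + 1) * ((i : ℝ) - (n : ℝ) * α)) /
        ((n : ℝ) * (1 - α))) * avar X i +
      (1 - ((n : ℝ) * (1 - α) - ((n : ℝ) - (i : ℝ) + 1) * ((i : ℝ) - (n : ℝ) * α)) /
        ((n : ℝ) * (1 - α))) * avar X (i - 1) := by
  obtain ⟨k, rfl⟩ := Nat.exists_eq_add_of_le' hi1
  have hkn : k + 1 < n := by omega
  have hn : (0 : ℝ) < n := by exact_mod_cast (show 0 < n by omega)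
  have hkn' : (k : ℝ) + 2 ≤ n := by exact_mod_cast hkn
  push_cast at hα1 hα2 ⊢
  simp only [add_sub_cancel_right] at hα1 ⊢
  have hnα1 : (k : ℝ) ≤ n * α := by rwa [div_le_iff₀ hn, mul_comm] at hα1
  have hnα2 : n * α ≤ k + 1 := by rwa [le_div_iff₀ hn, mul_comm] at hα2
  have hden : 0 < (n : ℝ) * (1 - α) := by nlinarith
  refine ⟨div_nonneg (by nlinarith) hden.le, (div_le_one hden).mpr (by nlinarith), ?_⟩
  rw [avarC, integral_var_of_mem_cell X (by omega) hα1 hα2, avar_eq_tailSum_div,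
    avar_eq_tailSum_div, tailSum_eq_add X (by omega : k < n)]
  push_cast
  have h1α : 1 - α ≠ 0 := by nlinarith
  have hnk : (n : ℝ) - k ≠ 0 := by linarith
  have hnk1 : (n : ℝ) - (k + 1) ≠ 0 := by linarith
  field_simp
  ring
end
end

section
/- For each α ∈ [0,1), AVaR_α on the uniform discrete n-point space is a coherent risk measure: monotone, positively homogeneous, convex (equivalently subadditive), and translation invariant. -/
open Finset MeasureTheory
open scoped Classical

noncomputable section

/-!
On the uniform `n`-point space `VaR_u(X)` is the step function equal to the order statistic
`x_[k+1]` for `u ∈ (k/n, (k+1)/n]`, so `AVaR_α(X) = (1 - α)⁻¹ ∑ⱼ wⱼ x_[j+1]`, where `wⱼ` is the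
length of `(j/n, (j+1)/n] ∩ [α, 1]`. These weights are nonnegative, nondecreasing and sum to
`1 - α`. By the rearrangement inequality, `∑ⱼ wⱼ x_[j+1]` is the maximum over permutations `σ` of
the linear functionals `X ↦ ∑ⱼ wⱼ X (σ j)`, each of which is monotone, positively homogeneous,
additive and shifts by `c (1 - α)` under `X ↦ X + c`; the maximum inherits monotonicity,
homogeneity, subadditivity and translation invariance.
-/
section OrderStatistics

variable {n : ℕ}

theorem card_filter_comp_perm (p : Fin n → Prop) [DecidablePred p] (σ : Equiv.Perm (Fin n)) :
    #{k | p (σ k)} = #{k | p k} := by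
  simp only [card_filter]
  exact Equiv.sum_comp σ fun k => if p k then 1 else 0

theorem Monotone.le_iff_lt_card_filter_le {β : Type*} [LinearOrder β] {f : Fin n → β}
    (hf : Monotone f) (j : Fin n) (t : β) : f j ≤ t ↔ (j : ℕ) < #{k | f k ≤ t} := by
  constructor
  · intro hj
    calc (j : ℕ) < #(Iic j) := by simp
      _ ≤ #{k | f k ≤ t} := card_le_card fun k hk => by
        simpa using (hf (mem_Iic.mp hk)).trans hj
  · intro hcard
    by_contra! hj
    have hsub : ({k | f k ≤ t} : Finset (Fin n)) ⊆ Iio j := fun k hk => by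
      simp only [mem_filter, mem_univ, true_and] at hk
      exact mem_Iio.mpr (lt_of_not_ge fun hjk => (hj.trans_le (hf hjk)).not_ge hk)
    simpa using hcard.trans_le (card_le_card hsub)

theorem osort_le_iff_lt_card (X : Fin n → ℝ) (j : Fin n) (t : ℝ) :
    osort X j ≤ t ↔ (j : ℕ) < #{k | X k ≤ t} := by
  unfold osort
  rw [(Tuple.monotone_sort X).le_iff_lt_card_filter_le]
  simp only [Function.comp_apply]
  rw [card_filter_comp_perm (fun k => X k ≤ t)]

theorem var_eq_osort_s9 (X : Fin n → ℝ) (j : Fin n) {u : ℝ} (hj : (j : ℝ) / n < u)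
    (hj' : u ≤ ((j : ℝ) + 1) / n) : var X u = osort X j := by
  have hn : (0 : ℝ) < n := by exact_mod_cast j.pos
  rw [div_lt_iff₀ hn] at hj
  rw [le_div_iff₀ hn] at hj'
  suffices {t : ℝ | u ≤ cdf X t} = Set.Ici (osort X j) by rw [var, this, csInf_Ici]
  ext t
  change u ≤ cdf X t ↔ osort X j ≤ t
  rw [cdf, le_div_iff₀ hn, osort_le_iff_lt_card]
  constructor
  · intro h
    exact_mod_cast hj.trans_le h
  · intro h
    have : (j : ℝ) + 1 ≤ #{k | X k ≤ t} := by exact_mod_cast h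
    linarith

end OrderStatistics

section SortedSum

variable {n : ℕ} (w : Fin n → ℝ)

def sortedSum (X : Fin n → ℝ) : ℝ := ∑ j, w j * osort X j

variable {w}

theorem sum_mul_comp_perm_le_sortedSum (hw : Monotone w) (X : Fin n → ℝ)
    (σ : Equiv.Perm (Fin n)) : ∑ j, w j * X (σ j) ≤ sortedSum w X := by
  have hX : ∀ j, X (σ j) = osort X (σ.trans (Tuple.sort X).symm j) := fun j => by
    simp [osort]
  simp only [hX, sortedSum, ← smul_eq_mul]
  exact (hw.monovary (Tuple.monotone_sort X)).sum_smul_comp_perm_le_sum_smul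

theorem sortedSum_mono (hw₀ : ∀ j, 0 ≤ w j) (hw : Monotone w) {X Y : Fin n → ℝ}
    (hXY : ∀ j, X j ≤ Y j) : sortedSum w X ≤ sortedSum w Y :=
  calc sortedSum w X = ∑ j, w j * X (Tuple.sort X j) := rfl
    _ ≤ ∑ j, w j * Y (Tuple.sort X j) := by gcongr with j; exacts [hw₀ j, hXY _]
    _ ≤ sortedSum w Y := sum_mul_comp_perm_le_sortedSum hw Y _

theorem sortedSum_add_le (hw : Monotone w) (X Y : Fin n → ℝ) :
    sortedSum w (fun j => X j + Y j) ≤ sortedSum w X + sortedSum w Y := by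
  set σ := Tuple.sort fun j => X j + Y j
  calc sortedSum w (fun j => X j + Y j) = ∑ j, w j * X (σ j) + ∑ j, w j * Y (σ j) := by
        simp only [sortedSum, osort, Function.comp_apply, mul_add, sum_add_distrib, σ]
    _ ≤ sortedSum w X + sortedSum w Y := by
        gcongr <;> exact sum_mul_comp_perm_le_sortedSum hw _ σ

theorem sortedSum_const_mul (hw : Monotone w) (X : Fin n → ℝ) {l : ℝ} (hl : 0 < l) :
    sortedSum w (fun j => l * X j) = l * sortedSum w X := by
  have hlin : ∀ σ : Equiv.Perm (Fin n), ∑ j, w j * (l * X (σ j)) = l * ∑ j, w j * X (σ j) :=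
    fun σ => by rw [mul_sum]; exact sum_congr rfl fun j _ => by ring
  apply le_antisymm
  · calc sortedSum w (fun j => l * X j) = l * ∑ j, w j * X (Tuple.sort (fun j => l * X j) j) :=
          hlin _
      _ ≤ l * sortedSum w X := by gcongr; exact sum_mul_comp_perm_le_sortedSum hw X _
  · calc l * sortedSum w X = ∑ j, w j * (l * X (Tuple.sort X j)) := (hlin _).symm
      _ ≤ sortedSum w (fun j => l * X j) :=
          sum_mul_comp_perm_le_sortedSum hw (fun j => l * X j) _

theorem sortedSum_add_const (hw : Monotone w) (X : Fin n → ℝ) (c : ℝ) :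
    sortedSum w (fun j => X j + c) = sortedSum w X + c * ∑ j, w j := by
  have hlin : ∀ σ : Equiv.Perm (Fin n),
      ∑ j, w j * (X (σ j) + c) = ∑ j, w j * X (σ j) + c * ∑ j, w j := fun σ => by
    rw [mul_sum, ← sum_add_distrib]; exact sum_congr rfl fun j _ => by ring
  apply le_antisymm
  · calc sortedSum w (fun j => X j + c)
          = ∑ j, w j * X (Tuple.sort (fun j => X j + c) j) + c * ∑ j, w j := hlin _
      _ ≤ sortedSum w X + c * ∑ j, w j := by
          gcongr; exact sum_mul_comp_perm_le_sortedSum hw X _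
  · calc sortedSum w X + c * ∑ j, w j = ∑ j, w j * (X (Tuple.sort X j) + c) := (hlin _).symm
      _ ≤ sortedSum w (fun j => X j + c) :=
          sum_mul_comp_perm_le_sortedSum hw (fun j => X j + c) _

end SortedSum

theorem monotone_max_add_sub_max (a : ℝ) {d : ℝ} (hd : 0 ≤ d) :
    Monotone fun x => max a (x + d) - max a x := by
  intro x y hxy
  simp only [max_def]
  split_ifs <;> linarith

section Weights

variable {n : ℕ} {α : ℝ}

/-- The knots cut `[α, 1]` into the pieces `(avarKnot n α k, avarKnot n α (k + 1)]` on which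
`VaR_u` is constant, equal to the order statistic `osort X k` (indexed from `0`). -/
def avarKnot (n : ℕ) (α : ℝ) (k : ℕ) : ℝ := max α (k / n)

def avarWeight (n : ℕ) (α : ℝ) (j : Fin n) : ℝ := avarKnot n α (j + 1) - avarKnot n α j

theorem avarKnot_mono (n : ℕ) (α : ℝ) : Monotone (avarKnot n α) := fun k l hkl => by
  unfold avarKnot
  gcongr

theorem avarKnot_zero (hα0 : 0 ≤ α) : avarKnot n α 0 = α := by simp [avarKnot, hα0]

theorem avarKnot_self (hn : 0 < n) (hα1 : α ≤ 1) : avarKnot n α n = 1 := by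
  rw [avarKnot, div_self (Nat.cast_ne_zero.mpr hn.ne'), max_eq_right hα1]

theorem avarWeight_nonneg (α : ℝ) (j : Fin n) : 0 ≤ avarWeight n α j :=
  sub_nonneg.mpr (avarKnot_mono n α (Nat.le_succ _))

theorem avarWeight_monotone (α : ℝ) : Monotone (avarWeight n α) := fun i j hij => by
  have := monotone_max_add_sub_max α (d := 1 / n) (by positivity)
    (show (i : ℝ) / n ≤ j / n by gcongr; exact_mod_cast hij)
  simpa [avarWeight, avarKnot, add_div] using this

theorem sum_avarWeight (hn : 0 < n) (hα0 : 0 ≤ α) (hα1 : α ≤ 1) :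
    ∑ j, avarWeight n α j = 1 - α := by
  unfold avarWeight
  rw [Fin.sum_univ_eq_sum_range (fun k => avarKnot n α (k + 1) - avarKnot n α k),
    sum_range_sub, avarKnot_self hn hα1, avarKnot_zero hα0]

theorem var_eqOn_uIoc_avarKnot (X : Fin n → ℝ) (j : Fin n) :
    Set.EqOn (var X) (fun _ => osort X j) (Set.uIoc (avarKnot n α j) (avarKnot n α (j + 1))) := by
  intro u hu
  rw [Set.uIoc_of_le (avarKnot_mono n α (Nat.le_succ _))] at hu
  obtain ⟨hlo, hhi⟩ := hu
  refine var_eq_osort_s9 X j ((le_max_right _ _).trans_lt hlo) ?_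
  rcases le_max_iff.mp hhi with h | h
  · exact absurd h ((le_max_left _ _).trans_lt hlo).not_ge
  · exact_mod_cast h

theorem integral_var_eq_sortedSum (hn : 0 < n) (hα0 : 0 ≤ α) (hα1 : α ≤ 1) (X : Fin n → ℝ) :
    ∫ u in α..1, var X u = sortedSum (avarWeight n α) X := by
  have hint : ∀ k < n,
      IntervalIntegrable (var X) volume (avarKnot n α k) (avarKnot n α (k + 1)) := fun k hk =>
    (intervalIntegrable_congr (var_eqOn_uIoc_avarKnot X ⟨k, hk⟩)).mpr intervalIntegrable_const
  have hsum := intervalIntegral.sum_integral_adjacent_intervals hint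
  rw [avarKnot_zero hα0, avarKnot_self hn hα1] at hsum
  rw [← hsum, ← Fin.sum_univ_eq_sum_range
    (fun k => ∫ u in avarKnot n α k..avarKnot n α (k + 1), var X u)]
  refine sum_congr rfl fun j _ => ?_
  rw [intervalIntegral.integral_congr_ae (ae_of_all _ (var_eqOn_uIoc_avarKnot X j)),
    intervalIntegral.integral_const, smul_eq_mul]
  rfl

end Weights

/-- `AVaR_α` is a coherent risk measure for every `α ∈ [0,1)`. -/
theorem avar_coherent {n : ℕ} (hn : 0 < n) (α : ℝ) (hα0 : 0 ≤ α) (hα1 : α < 1) :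
    (∀ X Y : Fin n → ℝ, (∀ j, X j ≤ Y j) → avarC X α ≤ avarC Y α) ∧
    (∀ (X : Fin n → ℝ) (l : ℝ), 0 < l → avarC (fun j => l * X j) α = l * avarC X α) ∧
    (∀ X Y : Fin n → ℝ, avarC (fun j => X j + Y j) α ≤ avarC X α + avarC Y α) ∧
    (∀ (X : Fin n → ℝ) (c : ℝ), avarC (fun j => X j + c) α = avarC X α + c) := by
  have hrep (X : Fin n → ℝ) : avarC X α = 1 / (1 - α) * sortedSum (avarWeight n α) X := by
    rw [avarC, integral_var_eq_sortedSum hn hα0 hα1.le]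
  have hw : Monotone (avarWeight n α) := avarWeight_monotone α
  have hα : 0 < 1 - α := sub_pos.mpr hα1
  refine ⟨fun X Y hXY => ?_, fun X l hl => ?_, fun X Y => ?_, fun X c => ?_⟩
  · rw [hrep, hrep]
    gcongr
    exact sortedSum_mono (avarWeight_nonneg α) hw hXY
  · rw [hrep, hrep, sortedSum_const_mul hw X hl]
    ring
  · rw [hrep, hrep, hrep, ← mul_add]
    gcongr
    exact sortedSum_add_le hw X Y
  · rw [hrep, hrep, sortedSum_add_const hw, sum_avarWeight hn hα0 hα1.le]
    field_simp

end
end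

section
/- For each α ∈ [0,1) and 0 ≤ i ≤ n−1 with α = i/n, AVaR_{i/n} on the uniform discrete n-point space is comonotone additive: if X, Y ∈ ℝⁿ satisfy (xⱼ − x_k)(yⱼ − y_k) ≥ 0 for all j, k, then AVaR_{i/n}(X + Y) = AVaR_{i/n}(X) + AVaR_{i/n}(Y). -/
open Finset MeasureTheory
open scoped Classical

noncomputable section

lemma le_of_add_le_add_of_mul_sub_nonneg {α : Type*} [CommRing α] [LinearOrder α]
    [IsStrictOrderedRing α] {x₁ x₂ y₁ y₂ : α} (hxy : 0 ≤ (x₁ - x₂) * (y₁ - y₂))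
    (hsum : x₁ + y₁ ≤ x₂ + y₂) : x₁ ≤ x₂ := by
  by_contra! hx
  nlinarith

namespace Comonotone

variable {n : ℕ} {X Y : Fin n → ℝ}

lemma symm (h : Comonotone X Y) : Comonotone Y X :=
  fun j k => by simpa only [mul_comm] using h j k

lemma monotone_comp_of_monotone_add {ι : Type*} [Preorder ι] (h : Comonotone X Y) {σ : ι → Fin n}
    (hsum : Monotone fun a => X (σ a) + Y (σ a)) : Monotone (X ∘ σ) :=
  fun _ _ hab => le_of_add_le_add_of_mul_sub_nonneg (h _ _) (hsum hab)

/-- The permutation sorting `X + Y` sorts `X` and `Y` as well. -/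
lemma osort_add (h : Comonotone X Y) : osort (fun j => X j + Y j) = osort X + osort Y := by
  set σ := Tuple.sort fun j => X j + Y j
  have hsum : Monotone fun a => X (σ a) + Y (σ a) :=
    Tuple.monotone_sort fun j => X j + Y j
  have hX : X ∘ σ = osort X :=
    Tuple.comp_sort_eq_comp_iff_monotone.mpr (h.monotone_comp_of_monotone_add hsum)
  have hY : Y ∘ σ = osort Y :=
    Tuple.comp_sort_eq_comp_iff_monotone.mpr
      (h.symm.monotone_comp_of_monotone_add (by simpa only [add_comm] using hsum))
  rw [← hX, ← hY]
  rfl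

end Comonotone

lemma avar_of_osort_eq_add {n : ℕ} {X Y Z : Fin n → ℝ} (h : osort Z = osort X + osort Y) (i : ℕ) :
    avar Z i = avar X i + avar Y i := by
  simp only [avar, h, Pi.add_apply, ← add_div, ← sum_add_distrib, ite_add_zero]

theorem avar_comonotone_additive_general {n : ℕ} (i : ℕ)
    (X Y : Fin n → ℝ) (hcom : Comonotone X Y) :
    avar (fun j => X j + Y j) i = avar X i + avar Y i :=
  avar_of_osort_eq_add hcom.osort_add i

/-- `AVaR_{i/n}` is comonotone additive for `0 ≤ i ≤ n-1`. -/
theorem avar_comonotone_additive {n : ℕ} (i : ℕ) (hi : i < n)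
    (X Y : Fin n → ℝ) (hcom : Comonotone X Y) :
    avar (fun j => X j + Y j) i = avar X i + avar Y i :=
  avar_comonotone_additive_general i X Y hcom

end
end
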